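/- arXiv:2402.08667 — 2 statements merged into one kernel-verified Lean document; each statement's English description precedes it below -/
import Mathlib

section
/- Denoising Score Identity (additive noise): for every y ∈ ℝ^d, ∇ log p_Y(y) = ∫ ∇ log p_W(y − x) · p_{X|Y}(x|y) dx, where ∇ log p_W(y − x) is the gradient of w ↦ log p_W(w) evaluated at w = y − x. -/
/-!
Differentiating `p_Y = p_X ⋆ p_W` under the integral sign, with the assumed local bound as
dominating function, gives `∇p_Y(y) = ∫ p_X(x) ∇p_W(y - x) dx`. Dividing by `p_Y(y) > 0` and
writing `∇p_W = p_W ∇log p_W` turns this into the posterior average of the score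
`∇log p_W(y - x)`. The one subtle point is that `x ↦ p_X(x) p_W(y - x)` is a priori integrable
only for almost every `y` (Fubini); the mean value inequality carries integrability from a nearby
good point to `y`.
-/

open MeasureTheory Metric InnerProductSpace Topology

section Gradient

variable {E : Type*} [NormedAddCommGroup E] [InnerProductSpace ℝ E] [CompleteSpace E]

theorem HasGradientAt.log {f : E → ℝ} {f' x : E} (hf : HasGradientAt f f' x) (hx : f x ≠ 0) :
    HasGradientAt (fun y => Real.log (f y)) ((f x)⁻¹ • f') x := by
  rw [hasGradientAt_iff_hasFDerivAt] at hf ⊢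
  simpa [map_smul] using hf.log hx

theorem hasGradientAt_mul_comp_sub {k : E → ℝ} (c : ℝ) {x y : E}
    (hk : DifferentiableAt ℝ k (y - x)) :
    HasGradientAt (fun z => c * k (z - x)) (c • gradient k (y - x)) y := by
  rw [hasGradientAt_iff_hasFDerivAt, map_smul, toDual_gradient]
  simpa using (hk.hasFDerivAt.comp y ((hasFDerivAt_id y).sub_const x)).const_mul c

variable {α : Type*} [MeasurableSpace α] {μ : Measure α}
  {F : E → α → ℝ} {G : E → α → E} {s : Set E} {bound : α → ℝ}

theorem MeasureTheory.Integrable.of_hasGradientAt_le {y₀ y : E} (hs : Convex ℝ s) (hy₀ : y₀ ∈ s)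
    (hy : y ∈ s) (hF₀ : Integrable (F y₀) μ) (hF_meas : AEStronglyMeasurable (F y) μ)
    (h_bound : ∀ᵐ a ∂μ, ∀ z ∈ s, ‖G z a‖ ≤ bound a) (bound_integrable : Integrable bound μ)
    (h_diff : ∀ᵐ a ∂μ, ∀ z ∈ s, HasGradientAt (F · a) (G z a) z) :
    Integrable (F y) μ := by
  have h_lip : ∀ᵐ a ∂μ, ‖F y a - F y₀ a‖ ≤ bound a * ‖y - y₀‖ := by
    filter_upwards [h_bound, h_diff] with a ha_bound ha_diff
    refine hs.norm_image_sub_le_of_norm_hasFDerivWithin_le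
      (fun z hz => (hasGradientAt_iff_hasFDerivAt.1 (ha_diff z hz)).hasFDerivWithinAt)
      (fun z hz => ?_) hy₀ hy
    rw [LinearIsometryEquiv.norm_map]
    exact ha_bound z hz
  have h_sub : Integrable (fun a => F y a - F y₀ a) μ :=
    (bound_integrable.mul_const _).mono' (hF_meas.sub hF₀.aestronglyMeasurable) h_lip
  exact (hF₀.add h_sub).congr (ae_of_all _ fun a => add_sub_cancel _ _)

theorem hasGradientAt_integral_of_dominated_of_gradient_le {y : E} (hs : s ∈ 𝓝 y)
    (hF_meas : ∀ᶠ z in 𝓝 y, AEStronglyMeasurable (F z) μ) (hF_int : Integrable (F y) μ)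
    (hG_meas : AEStronglyMeasurable (G y) μ)
    (h_bound : ∀ᵐ a ∂μ, ∀ z ∈ s, ‖G z a‖ ≤ bound a) (bound_integrable : Integrable bound μ)
    (h_diff : ∀ᵐ a ∂μ, ∀ z ∈ s, HasGradientAt (F · a) (G z a) z) :
    HasGradientAt (fun z => ∫ a, F z a ∂μ) (∫ a, G y a ∂μ) y := by
  rw [hasGradientAt_iff_hasFDerivAt, ← LinearIsometryEquiv.coe_toLinearIsometry,
    ← LinearIsometry.integral_comp_comm]
  refine hasFDerivAt_integral_of_dominated_of_fderiv_le (F' := fun z a => toDual ℝ E (G z a)) hs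
    hF_meas hF_int ((toDual ℝ E).continuous.comp_aestronglyMeasurable hG_meas) ?_
    bound_integrable ?_
  · filter_upwards [h_bound] with a ha z hz
    simpa using ha z hz
  · filter_upwards [h_diff] with a ha z hz
    exact hasGradientAt_iff_hasFDerivAt.1 (ha z hz)

end Gradient

section Convolution

variable {E : Type*} [NormedAddCommGroup E] [InnerProductSpace ℝ E] [FiniteDimensional ℝ E]
  [MeasurableSpace E] [BorelSpace E] {μ : Measure E} [μ.IsAddHaarMeasure]

theorem exists_mem_integrable_mul_comp_sub {f k : E → ℝ} (hf : Integrable f μ)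
    (hk : Integrable k μ) {U : Set E} (hU : IsOpen U) (hU_ne : U.Nonempty) :
    ∃ y ∈ U, Integrable (fun x => f x * k (y - x)) μ := by
  have h_ae : ∀ᵐ y ∂μ, Integrable (fun x => f x * k (y - x)) μ :=
    hf.ae_convolution_exists (L := ContinuousLinearMap.mul ℝ ℝ) hk
  have : (ae (μ.restrict U)).NeBot := ae_restrict_neBot.2 (hU.measure_ne_zero μ hU_ne)
  exact ((ae_restrict_mem hU.measurableSet).and (ae_restrict_of_ae h_ae)).exists

theorem hasGradientAt_integral_mul_comp_sub {f k g : E → ℝ} {y : E} {ε : ℝ} (hε : 0 < ε)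
    (hf : Integrable f μ) (hk_int : Integrable k μ) (hk : ContDiff ℝ 1 k) (hg : Integrable g μ)
    (h_bound : ∀ z ∈ ball y ε, ∀ x, ‖f x‖ * ‖gradient k (z - x)‖ ≤ g x) :
    Integrable (fun x => f x * k (y - x)) μ ∧
      HasGradientAt (fun z => ∫ x, f x * k (z - x) ∂μ) (∫ x, f x • gradient k (y - x) ∂μ) y := by
  have hk_grad : Continuous (gradient k) :=
    (toDual ℝ E).symm.continuous.comp (hk.continuous_fderiv one_ne_zero)
  have h_meas (z : E) : AEStronglyMeasurable (fun x => f x * k (z - x)) μ :=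
    hf.aestronglyMeasurable.mul (hk.continuous.comp (by fun_prop)).aestronglyMeasurable
  have h_bound' : ∀ᵐ x ∂μ, ∀ z ∈ ball y ε, ‖f x • gradient k (z - x)‖ ≤ g x :=
    ae_of_all _ fun x z hz => (norm_smul _ _).trans_le (h_bound z hz x)
  have h_diff : ∀ᵐ x ∂μ, ∀ z ∈ ball y ε,
      HasGradientAt (fun z => f x * k (z - x)) (f x • gradient k (z - x)) z :=
    ae_of_all _ fun x z _ => hasGradientAt_mul_comp_sub (f x) (hk.differentiable one_ne_zero _)
  obtain ⟨y₁, hy₁, hint₁⟩ := exists_mem_integrable_mul_comp_sub hf hk_int isOpen_ball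
    (nonempty_ball.2 hε)
  have hint : Integrable (fun x => f x * k (y - x)) μ :=
    hint₁.of_hasGradientAt_le (convex_ball y ε) hy₁ (mem_ball_self hε) (h_meas y) h_bound' hg
      h_diff
  refine ⟨hint, hasGradientAt_integral_of_dominated_of_gradient_le (ball_mem_nhds y hε)
    (.of_forall h_meas) hint ?_ h_bound' hg h_diff⟩
  exact hf.aestronglyMeasurable.smul (hk_grad.comp (by fun_prop)).aestronglyMeasurable

end Convolution

theorem denoising_score_identity_general
    (d : ℕ)
    (pX pW : EuclideanSpace ℝ (Fin d) → ℝ)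
    (hpX_pos : ∀ x, 0 < pX x) (hpW_pos : ∀ w, 0 < pW w)
    (hpW_diff : ContDiff ℝ 1 pW)
    (hpX_prob : ∫ x, pX x = 1) (hpW_prob : ∫ w, pW w = 1)
    (pY : EuclideanSpace ℝ (Fin d) → ℝ)
    (hpY : ∀ y, pY y = ∫ x, pX x * pW (y - x))
    (pXgY : EuclideanSpace ℝ (Fin d) → EuclideanSpace ℝ (Fin d) → ℝ)
    (hpXgY : ∀ x y, pXgY x y = pX x * pW (y - x) / pY y)
    (hDom : ∀ y, ∃ ε > 0, ∃ g : EuclideanSpace ℝ (Fin d) → ℝ, Integrable g ∧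
      ∀ y', dist y' y < ε → ∀ x, pX x * ‖gradient pW (y' - x)‖ ≤ g x) :
    ∀ y, gradient (fun y' => Real.log (pY y')) y
      = ∫ x, pXgY x y • gradient (fun w => Real.log (pW w)) (y - x) := by
  intro y
  obtain ⟨ε, hε, g, hg, hg_bound⟩ := hDom y
  have hpX_int : Integrable pX := .of_integral_ne_zero (by simp [hpX_prob])
  have hpW_int : Integrable pW := .of_integral_ne_zero (by simp [hpW_prob])
  obtain ⟨hint, hpY_grad⟩ := hasGradientAt_integral_mul_comp_sub hε hpX_int hpW_int hpW_diff hg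
    fun z hz x => by simpa [Real.norm_of_nonneg (hpX_pos x).le] using hg_bound z hz x
  rw [← funext hpY] at hpY_grad
  have hpY_pos : 0 < pY y := by
    rw [hpY, integral_pos_iff_support_of_nonneg
      (fun x => (mul_pos (hpX_pos x) (hpW_pos _)).le) hint]
    simp [Function.support, (hpX_pos _).ne', (hpW_pos _).ne', NeZero.ne]
  have hscore (w) : gradient (fun w => Real.log (pW w)) w = (pW w)⁻¹ • gradient pW w :=
    ((hpW_diff.differentiable one_ne_zero w).hasGradientAt.log (hpW_pos w).ne').gradient
  rw [(hpY_grad.log hpY_pos.ne').gradient, ← integral_smul]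
  congr 1
  funext x
  rw [hscore, hpXgY, smul_smul, smul_smul]
  congr 1
  field_simp [(hpW_pos (y - x)).ne']

/-- **Denoising Score Identity** (additive noise model `Y = X + W`):
for every `y`, `∇ log p_Y(y) = ∫ ∇ log p_W(y - x) p_{X|Y}(x|y) dx`. -/
theorem denoising_score_identity
    (d : ℕ) (hd : 1 ≤ d)
    (pX pW : EuclideanSpace ℝ (Fin d) → ℝ)
    (hpX_pos : ∀ x, 0 < pX x) (hpW_pos : ∀ w, 0 < pW w)
    (hpX_diff : ContDiff ℝ 1 pX) (hpW_diff : ContDiff ℝ 1 pW)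
    (hpX_prob : ∫ x, pX x = 1) (hpW_prob : ∫ w, pW w = 1)
    (pY : EuclideanSpace ℝ (Fin d) → ℝ)
    (hpY : ∀ y, pY y = ∫ x, pX x * pW (y - x))
    (pXgY : EuclideanSpace ℝ (Fin d) → EuclideanSpace ℝ (Fin d) → ℝ)
    (hpXgY : ∀ x y, pXgY x y = pX x * pW (y - x) / pY y)
    (hInt : ∀ y, Integrable (fun x => pX x * ‖gradient pW (y - x)‖))
    (hDom : ∀ y, ∃ ε > 0, ∃ g : EuclideanSpace ℝ (Fin d) → ℝ, Integrable g ∧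
      ∀ y', dist y' y < ε → ∀ x, pX x * ‖gradient pW (y' - x)‖ ≤ g x) :
    ∀ y, gradient (fun y' => Real.log (pY y')) y
      = ∫ x, pXgY x y • gradient (fun w => Real.log (pW w)) (y - x) :=
  denoising_score_identity_general d pX pW hpX_pos hpW_pos hpW_diff hpX_prob hpW_prob pY hpY pXgY
    hpXgY hDom
end

section
/- Relation between the Target Score Matching and Denoising Score Matching losses: for any measurable vector field s : ℝ^d → ℝ^d, ∬ ‖s(y) − ∇ log p_X(x)‖² p_X(x) p_W(y − x) dx dy = ∬ ‖s(y) − ∇ log p_W(y − x)‖² p_X(x) p_W(y − x) dx dy + ∫ ‖∇ log p_X(x)‖² p_X(x) dx − ∬ ‖∇ log p_W(y − x)‖² p_X(x) p_W(y − x) dx dy, provided all four integrals are finite. -/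
open MeasureTheory

/-! Expanding both squares, `‖s - ∇log p_X(x)‖² - ‖s - ∇log p_W(y - x)‖²` equals
`‖∇log p_X(x)‖² - ‖∇log p_W(y - x)‖² - 2⟪s(y), ∇log p_X(x) - ∇log p_W(y - x)⟫`.
Weighted by the joint density `p(x, y) = p_X(x) p_W(y - x)`, the vector in the cross term is
`∇ₓ p(x, y)`, whose integral in `x` vanishes for every `y` (integration by parts), so the cross
term drops out; in the remaining `‖∇log p_X‖²` term the variable `y` integrates out because
`p_W` is a probability density. -/

section IntegrationByParts

variable {E : Type*} [NormedAddCommGroup E] [InnerProductSpace ℝ E] [FiniteDimensional ℝ E]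
  [MeasurableSpace E] [BorelSpace E] {μ : Measure E} [μ.IsAddHaarMeasure]

theorem integral_fderiv_apply_eq_zero {f : E → ℝ} (hf : Differentiable ℝ f)
    (hfi : Integrable f μ) {v : E} (hf'i : Integrable (fun x => fderiv ℝ f x v) μ) :
    ∫ x, fderiv ℝ f x v ∂μ = 0 := by
  simpa using integral_mul_fderiv_eq_neg_fderiv_mul_of_integrable
    (f := fun _ => (1 : ℝ)) (g := f) (v := v) (μ := μ) (by simp) (by simpa using hf'i)
    (by simpa using hfi) (fun x _ => differentiableAt_const _) (fun x _ => hf x)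

theorem integral_gradient_eq_zero {f : E → ℝ} (hf : Differentiable ℝ f)
    (hfi : Integrable f μ) (hgrad : Integrable (gradient f) μ) :
    ∫ x, gradient f x ∂μ = 0 := by
  refine ext_inner_right ℝ fun v => ?_
  have hgrad_v : Integrable (fun x => fderiv ℝ f x v) μ := by
    simpa only [inner_gradient_left] using hgrad.inner_const (𝕜 := ℝ) v
  rw [inner_zero_left, real_inner_comm, ← integral_inner hgrad]
  simpa only [inner_gradient_right, conj_trivial] using
    integral_fderiv_apply_eq_zero hf hfi hgrad_v

theorem integral_prod_inner_gradient_eq_zero {F : Type*} [MeasurableSpace F] {ν : Measure F}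
    [SigmaFinite ν] {q : E → F → ℝ} (s : F → E) (hq : ∀ y, Differentiable ℝ (q · y))
    (hqi : ∀ y, Integrable (q · y) μ) (hgrad : ∀ y, Integrable (gradient (q · y)) μ)
    (h : Integrable (fun p : E × F => inner ℝ (s p.2) (gradient (q · p.2) p.1)) (μ.prod ν)) :
    ∫ p, inner ℝ (s p.2) (gradient (q · p.2) p.1) ∂(μ.prod ν) = 0 := by
  rw [integral_prod_symm _ h]
  simp_rw [integral_inner (hgrad _), integral_gradient_eq_zero (hq _) (hqi _) (hgrad _),
    inner_zero_right, integral_zero]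

end IntegrationByParts

section Gradient

variable {E : Type*} [NormedAddCommGroup E] [InnerProductSpace ℝ E] [CompleteSpace E]

theorem gradient_log {f : E → ℝ} {x : E} (hf : DifferentiableAt ℝ f x) (hx : f x ≠ 0) :
    gradient (fun y => Real.log (f y)) x = (f x)⁻¹ • gradient f x := by
  refine HasGradientAt.gradient (hasGradientAt_iff_hasFDerivAt.2 ?_)
  refine (hf.hasFDerivAt.log hx).congr_fderiv ?_
  ext v
  simp [toDual_gradient]

theorem gradient_mul_comp_sub {f g : E → ℝ} (hf : Differentiable ℝ f) (hg : Differentiable ℝ g)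
    (y x : E) :
    gradient (fun x' => f x' * g (y - x')) x
      = g (y - x) • gradient f x - f x • gradient g (y - x) := by
  refine HasGradientAt.gradient (hasGradientAt_iff_hasFDerivAt.2 ?_)
  have hg' : HasFDerivAt (fun x' => g (y - x')) (-(fderiv ℝ g (y - x))) x := by
    simpa [Function.comp_def] using
      (hg (y - x)).hasFDerivAt.comp x ((hasFDerivAt_id x).const_sub y)
  refine ((hf x).hasFDerivAt.mul hg').congr_fderiv ?_
  ext v
  simp only [add_apply, smul_apply, neg_apply, sub_apply, map_sub, map_smul, toDual_gradient,
    smul_neg, smul_eq_mul]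
  ring

theorem gradient_mul_comp_sub_eq_smul_sub_gradient_log {f g : E → ℝ} (hf : Differentiable ℝ f)
    (hg : Differentiable ℝ g) (hf_pos : ∀ x, 0 < f x) (hg_pos : ∀ w, 0 < g w) (y x : E) :
    gradient (fun x' => f x' * g (y - x')) x
      = (f x * g (y - x)) •
          (gradient (fun x' => Real.log (f x')) x - gradient (fun w => Real.log (g w)) (y - x)) := by
  rw [gradient_mul_comp_sub hf hg, gradient_log (hf x) (hf_pos x).ne',
    gradient_log (hg (y - x)) (hg_pos (y - x)).ne', smul_sub, smul_smul, smul_smul,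
    mul_inv_cancel_right₀ (hg_pos _).ne', mul_comm (f x), mul_inv_cancel_right₀ (hf_pos _).ne']

end Gradient

section Convolution

variable {G : Type*} [MeasurableSpace G] [AddGroup G] [MeasurableAdd₂ G] [MeasurableNeg G]
  {μ ν : Measure G} [SigmaFinite μ] [SigmaFinite ν] [ν.IsAddRightInvariant]

theorem integrable_mul_comp_sub {f g : G → ℝ} (hf : Integrable f μ) (hg : Integrable g ν) :
    Integrable (fun p : G × G => f p.1 * g (p.2 - p.1)) (μ.prod ν) :=
  (measurePreserving_prod_sub μ ν).integrable_comp_of_integrable (hf.mul_prod hg)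

theorem integral_mul_comp_sub (f g : G → ℝ) :
    ∫ p : G × G, f p.1 * g (p.2 - p.1) ∂(μ.prod ν) = (∫ x, f x ∂μ) * ∫ y, g y ∂ν := by
  rw [← integral_prod_mul f g]
  exact (measurePreserving_prod_sub μ ν).integral_comp
    (MeasurableEquiv.shearSubRight G).measurableEmbedding fun p => f p.1 * g p.2

end Convolution

theorem norm_sub_sq_sub_norm_sub_sq {V : Type*} [NormedAddCommGroup V] [InnerProductSpace ℝ V]
    (a u v : V) :
    ‖a - u‖ ^ 2 - ‖a - v‖ ^ 2 = ‖u‖ ^ 2 - ‖v‖ ^ 2 - 2 * inner ℝ a (u - v) := by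
  rw [norm_sub_sq_real, norm_sub_sq_real, inner_sub_right]
  ring

section WeightedSquares

variable {α V : Type*} [MeasurableSpace α] {μ : Measure α} [NormedAddCommGroup V]
  [InnerProductSpace ℝ V] {a u v : α → V} {w : α → ℝ}

theorem integrable_inner_smul_sub (hu : Integrable (fun p => ‖a p - u p‖ ^ 2 * w p) μ)
    (hv : Integrable (fun p => ‖a p - v p‖ ^ 2 * w p) μ)
    (hu' : Integrable (fun p => ‖u p‖ ^ 2 * w p) μ)
    (hv' : Integrable (fun p => ‖v p‖ ^ 2 * w p) μ) :
    Integrable (fun p => inner ℝ (a p) (w p • (u p - v p))) μ := by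
  refine ((((hv.add hu').sub hv').sub hu).div_const 2).congr (ae_of_all _ fun p => ?_)
  simp only [Pi.add_apply, Pi.sub_apply, real_inner_smul_right]
  linear_combination (-w p / 2) * norm_sub_sq_sub_norm_sub_sq (a p) (u p) (v p)

theorem integral_norm_sub_sq_mul_eq (hu : Integrable (fun p => ‖a p - u p‖ ^ 2 * w p) μ)
    (hv : Integrable (fun p => ‖a p - v p‖ ^ 2 * w p) μ)
    (hu' : Integrable (fun p => ‖u p‖ ^ 2 * w p) μ)
    (hv' : Integrable (fun p => ‖v p‖ ^ 2 * w p) μ)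
    (horth : ∫ p, inner ℝ (a p) (w p • (u p - v p)) ∂μ = 0) :
    ∫ p, ‖a p - u p‖ ^ 2 * w p ∂μ
      = (∫ p, ‖a p - v p‖ ^ 2 * w p ∂μ) + (∫ p, ‖u p‖ ^ 2 * w p ∂μ)
        - ∫ p, ‖v p‖ ^ 2 * w p ∂μ := by
  have hcross := (integrable_inner_smul_sub hu hv hu' hv').const_mul 2
  calc ∫ p, ‖a p - u p‖ ^ 2 * w p ∂μ
      = ∫ p, ‖a p - v p‖ ^ 2 * w p + ‖u p‖ ^ 2 * w p - ‖v p‖ ^ 2 * w p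
          - 2 * inner ℝ (a p) (w p • (u p - v p)) ∂μ := by
        refine integral_congr_ae (ae_of_all _ fun p => ?_)
        simp only [real_inner_smul_right]
        linear_combination w p * norm_sub_sq_sub_norm_sub_sq (a p) (u p) (v p)
    _ = _ := by
        rw [integral_sub (by exact (hv.add hu').sub hv') hcross,
          integral_sub (by exact hv.add hu') hv', integral_add hv hu', integral_const_mul, horth,
          mul_zero, sub_zero]

end WeightedSquares

theorem tsm_eq_dsm_plus_fisher_difference_general
    (d : ℕ)
    (pX pW : EuclideanSpace ℝ (Fin d) → ℝ)
    (hpX_pos : ∀ x, 0 < pX x) (hpW_pos : ∀ w, 0 < pW w)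
    (hpX_diff : ContDiff ℝ 1 pX) (hpW_diff : ContDiff ℝ 1 pW)
    (hpW_prob : ∫ w, pW w = 1)
    (hInt : ∀ y, Integrable (fun x => pX x * pW (y - x)))
    (hIntGrad : ∀ y, Integrable (fun x => gradient (fun x' => pX x' * pW (y - x')) x))
    (s : EuclideanSpace ℝ (Fin d) → EuclideanSpace ℝ (Fin d))
    (hTSM : Integrable (fun p : EuclideanSpace ℝ (Fin d) × EuclideanSpace ℝ (Fin d) =>
      ‖s p.2 - gradient (fun x' => Real.log (pX x')) p.1‖ ^ 2 * (pX p.1 * pW (p.2 - p.1))))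
    (hDSM : Integrable (fun p : EuclideanSpace ℝ (Fin d) × EuclideanSpace ℝ (Fin d) =>
      ‖s p.2 - gradient (fun w => Real.log (pW w)) (p.2 - p.1)‖ ^ 2 * (pX p.1 * pW (p.2 - p.1))))
    (hFisherX : Integrable (fun x => ‖gradient (fun x' => Real.log (pX x')) x‖ ^ 2 * pX x))
    (hFisherW : Integrable (fun p : EuclideanSpace ℝ (Fin d) × EuclideanSpace ℝ (Fin d) =>
      ‖gradient (fun w => Real.log (pW w)) (p.2 - p.1)‖ ^ 2 * (pX p.1 * pW (p.2 - p.1)))) :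
    (∫ p : EuclideanSpace ℝ (Fin d) × EuclideanSpace ℝ (Fin d),
        ‖s p.2 - gradient (fun x' => Real.log (pX x')) p.1‖ ^ 2 * (pX p.1 * pW (p.2 - p.1)))
    = (∫ p : EuclideanSpace ℝ (Fin d) × EuclideanSpace ℝ (Fin d),
        ‖s p.2 - gradient (fun w => Real.log (pW w)) (p.2 - p.1)‖ ^ 2 * (pX p.1 * pW (p.2 - p.1)))
      + (∫ x, ‖gradient (fun x' => Real.log (pX x')) x‖ ^ 2 * pX x)
      - (∫ p : EuclideanSpace ℝ (Fin d) × EuclideanSpace ℝ (Fin d),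
        ‖gradient (fun w => Real.log (pW w)) (p.2 - p.1)‖ ^ 2 * (pX p.1 * pW (p.2 - p.1))) := by
  have hpX : Differentiable ℝ pX := hpX_diff.differentiable one_ne_zero
  have hpW : Differentiable ℝ pW := hpW_diff.differentiable one_ne_zero
  have hpW_int : Integrable pW := .of_integral_ne_zero (by simp [hpW_prob])
  have hscore := gradient_mul_comp_sub_eq_smul_sub_gradient_log hpX hpW hpX_pos hpW_pos
  have hFisherX_joint := integrable_mul_comp_sub (ν := volume) hFisherX hpW_int
  simp only [mul_assoc] at hFisherX_joint
  have hcross := integral_prod_inner_gradient_eq_zero (μ := volume) (ν := volume)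
    (q := fun x y => pX x * pW (y - x)) s (fun y => by fun_prop) hInt hIntGrad
    (by simp_rw [hscore]; exact integrable_inner_smul_sub hTSM hDSM hFisherX_joint hFisherW)
  simp_rw [hscore] at hcross
  rw [integral_norm_sub_sq_mul_eq hTSM hDSM hFisherX_joint hFisherW hcross]
  have hFisherX_marginal := integral_mul_comp_sub (μ := volume) (ν := volume)
    (fun x => ‖gradient (fun x' => Real.log (pX x')) x‖ ^ 2 * pX x) pW
  simp only [mul_assoc, hpW_prob, mul_one, ← Measure.volume_eq_prod] at hFisherX_marginal
  rw [hFisherX_marginal]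

/-- **Relation between the TSM and DSM losses**:
`ℓ_TSM(s) = ℓ_DSM(s) + ∫ ‖∇ log p_X(x)‖² p_X(x) dx
  - ∬ ‖∇ log p_W(y-x)‖² p_X(x) p_W(y-x) dx dy`, provided all integrals are finite. -/
theorem tsm_eq_dsm_plus_fisher_difference
    (d : ℕ) (hd : 1 ≤ d)
    (pX pW : EuclideanSpace ℝ (Fin d) → ℝ)
    (hpX_pos : ∀ x, 0 < pX x) (hpW_pos : ∀ w, 0 < pW w)
    (hpX_diff : ContDiff ℝ 1 pX) (hpW_diff : ContDiff ℝ 1 pW)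
    (hpX_prob : ∫ x, pX x = 1) (hpW_prob : ∫ w, pW w = 1)
    (hInt : ∀ y, Integrable (fun x => pX x * pW (y - x)))
    (hIntGrad : ∀ y, Integrable (fun x => gradient (fun x' => pX x' * pW (y - x')) x))
    (s : EuclideanSpace ℝ (Fin d) → EuclideanSpace ℝ (Fin d))
    (hs : Measurable s)
    (hTSM : Integrable (fun p : EuclideanSpace ℝ (Fin d) × EuclideanSpace ℝ (Fin d) =>
      ‖s p.2 - gradient (fun x' => Real.log (pX x')) p.1‖ ^ 2 * (pX p.1 * pW (p.2 - p.1))))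
    (hDSM : Integrable (fun p : EuclideanSpace ℝ (Fin d) × EuclideanSpace ℝ (Fin d) =>
      ‖s p.2 - gradient (fun w => Real.log (pW w)) (p.2 - p.1)‖ ^ 2 * (pX p.1 * pW (p.2 - p.1))))
    (hFisherX : Integrable (fun x => ‖gradient (fun x' => Real.log (pX x')) x‖ ^ 2 * pX x))
    (hFisherW : Integrable (fun p : EuclideanSpace ℝ (Fin d) × EuclideanSpace ℝ (Fin d) =>
      ‖gradient (fun w => Real.log (pW w)) (p.2 - p.1)‖ ^ 2 * (pX p.1 * pW (p.2 - p.1)))) :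
    (∫ p : EuclideanSpace ℝ (Fin d) × EuclideanSpace ℝ (Fin d),
        ‖s p.2 - gradient (fun x' => Real.log (pX x')) p.1‖ ^ 2 * (pX p.1 * pW (p.2 - p.1)))
    = (∫ p : EuclideanSpace ℝ (Fin d) × EuclideanSpace ℝ (Fin d),
        ‖s p.2 - gradient (fun w => Real.log (pW w)) (p.2 - p.1)‖ ^ 2 * (pX p.1 * pW (p.2 - p.1)))
      + (∫ x, ‖gradient (fun x' => Real.log (pX x')) x‖ ^ 2 * pX x)
      - (∫ p : EuclideanSpace ℝ (Fin d) × EuclideanSpace ℝ (Fin d),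
        ‖gradient (fun w => Real.log (pW w)) (p.2 - p.1)‖ ^ 2 * (pX p.1 * pW (p.2 - p.1))) :=
  tsm_eq_dsm_plus_fisher_difference_general d pX pW hpX_pos hpW_pos hpX_diff hpW_diff hpW_prob hInt
    hIntGrad s hTSM hDSM hFisherX hFisherW
end
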